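/- Let A be a complete normed ring with unit 1, R : ℝ → A Bochner measurable, β : ℝ → ℝ integrable with ‖R(τ)‖ ≤ β(τ) a.e., and Q(t,s) the Dyson series. Then for all s ≤ t, Q(·,s) satisfies the Volterra integral equation Q(t,s) = 1 + i ∫_s^t R(τ) · Q(τ,s) dτ. -/

import Mathlib

open MeasureTheory intervalIntegral Filter Topology

/-- The `k`-fold time-ordered iterated Bochner integral
`∫_s^t R(t₁) (∫_s^{t₁} R(t₂) ( ⋯ (∫_s^{t_{k−1}} R(t_k) dt_k) ⋯ ) dt₂) dt₁`. -/
noncomputable def timeOrderedIntegral {A : Type*} [NormedRing A] [NormedSpace ℝ A]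
    (f : ℝ → A) (s : ℝ) : ℕ → ℝ → A
  | 0, _ => 1
  | k + 1, t => ∫ τ in s..t, f τ * timeOrderedIntegral f s k τ

/-- The Dyson series
`Q(t,s) = 1 + Σ_{k≥1} i^k ∫_s^t R(t₁) ∫_s^{t₁} R(t₂) ⋯ ∫_s^{t_{k−1}} R(t_k) dt_k ⋯ dt₁`. -/
noncomputable def dyson {A : Type*} [NormedRing A] [NormedAlgebra ℂ A]
    (R : ℝ → A) (s t : ℝ) : A :=
  1 + ∑' k : ℕ, (Complex.I ^ (k + 1)) • timeOrderedIntegral R s (k + 1) t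

/-!
Write `T k t` for the `k`-th time-ordered integral, so that `T (k + 1) t = ∫_s^t R τ * T k τ`.
Termwise, `R τ * Q(τ, s) = ∑ i^k R τ * T k τ`, and integrating the `k`-th term over `[s, t]`
gives `i^k T (k + 1) t`; multiplying by `i` shifts the series to `Q(t, s) - 1`. Sum and integral
commute by dominated convergence, thanks to the bound `‖T k τ‖ ≤ ‖1‖ ρ(τ)^k / k!` with
`ρ(τ) = ∫_s^τ ‖R‖`; the bound follows by induction from `∫_s^τ ‖R u‖ ρ(u)^k du = ρ(τ)^(k+1)/(k+1)`,
the fundamental theorem of calculus for the absolutely continuous function `ρ^(k+1)`.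
-/

open Set

theorem AbsolutelyContinuousOnInterval.pow {f : ℝ → ℝ} {a b : ℝ}
    (hf : AbsolutelyContinuousOnInterval f a b) (n : ℕ) :
    AbsolutelyContinuousOnInterval (fun x ↦ f x ^ n) a b := by
  induction n with
  | zero => simpa using (LipschitzWith.const (1 : ℝ)).lipschitzOnWith.absolutelyContinuousOnInterval
  | succ n ih => simpa only [pow_succ] using ih.fun_mul hf

theorem MeasureTheory.LocallyIntegrable.intervalIntegrable {E : Type*} [NormedAddCommGroup E]
    {f : ℝ → E} (hf : LocallyIntegrable f volume) (a b : ℝ) : IntervalIntegrable f volume a b :=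
  (hf.integrableOn_isCompact isCompact_uIcc).intervalIntegrable

theorem MeasureTheory.LocallyIntegrable.norm {E : Type*} [NormedAddCommGroup E]
    {f : ℝ → E} (hf : LocallyIntegrable f volume) : LocallyIntegrable (fun x ↦ ‖f x‖) volume :=
  locallyIntegrableOn_univ.mp (hf.locallyIntegrableOn univ).norm

theorem integral_mul_primitive_pow {g : ℝ → ℝ} (hg : LocallyIntegrable g volume) (a b : ℝ)
    (k : ℕ) :
    ∫ u in a..b, g u * (∫ v in a..u, g v) ^ k = (∫ v in a..b, g v) ^ (k + 1) / (k + 1) := by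
  set G := fun x ↦ ∫ v in a..x, g v
  have hG : AbsolutelyContinuousOnInterval (fun x ↦ G x ^ (k + 1) / (k + 1)) a b := by
    simpa only [div_eq_inv_mul] using ((hg.intervalIntegrable a b
      |>.absolutelyContinuousOnInterval_intervalIntegral left_mem_uIcc).pow (k + 1)).const_mul _
  have hderiv : ∀ᵐ x, deriv (fun x ↦ G x ^ (k + 1) / (k + 1)) x = g x * G x ^ k := by
    filter_upwards [LocallyIntegrable.ae_hasDerivAt_integral hg] with x hx
    refine (((hx a).pow (k + 1)).div_const _).deriv.trans ?_
    field_simp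
    push_cast
    ring
  rw [← integral_congr_ae (hderiv.mono fun x hx _ ↦ hx), hG.integral_deriv_eq_sub]
  simp [G]

namespace timeOrderedIntegral

variable {A : Type*} [NormedRing A] [NormedSpace ℝ A] {R : ℝ → A} {s : ℝ}

@[simp]
theorem zero_apply (t : ℝ) : timeOrderedIntegral R s 0 t = 1 :=
  rfl

theorem succ_apply (k : ℕ) (t : ℝ) :
    timeOrderedIntegral R s (k + 1) t = ∫ τ in s..t, R τ * timeOrderedIntegral R s k τ :=
  rfl

theorem continuous (hR : LocallyIntegrable R volume) (k : ℕ) :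
    Continuous (timeOrderedIntegral R s k) := by
  induction k with
  | zero => exact continuous_const
  | succ k ih => exact continuous_primitive ((hR.mul_continuous ih).intervalIntegrable) s

theorem norm_le (hR : LocallyIntegrable R volume) (k : ℕ) {t : ℝ} (hst : s ≤ t) :
    ‖timeOrderedIntegral R s k t‖ ≤ ‖(1 : A)‖ * (∫ τ in s..t, ‖R τ‖) ^ k / k.factorial := by
  induction k generalizing t with
  | zero => simp
  | succ k ih =>
    have hRn : LocallyIntegrable (fun τ ↦ ‖R τ‖) volume := hR.norm
    have hρ : Continuous fun t ↦ ∫ τ in s..t, ‖R τ‖ :=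
      continuous_primitive hRn.intervalIntegrable s
    calc ‖timeOrderedIntegral R s (k + 1) t‖
        ≤ ∫ τ in s..t, ‖R τ‖ * (‖(1 : A)‖ * (∫ σ in s..τ, ‖R σ‖) ^ k / k.factorial) := by
          refine norm_integral_le_of_norm_le hst ?_
            ((hRn.intervalIntegrable s t).mul_continuousOn (by fun_prop))
          filter_upwards with τ hτ
          exact (norm_mul_le _ _).trans (by gcongr; exact ih hτ.1.le)
      _ = ‖(1 : A)‖ / k.factorial * ∫ τ in s..t, ‖R τ‖ * (∫ σ in s..τ, ‖R σ‖) ^ k := by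
          rw [← intervalIntegral.integral_const_mul]
          congr 1 with τ
          ring
      _ = ‖(1 : A)‖ * (∫ τ in s..t, ‖R τ‖) ^ (k + 1) / (k + 1).factorial := by
          rw [integral_mul_primitive_pow hRn, Nat.factorial_succ]
          push_cast
          field_simp

theorem norm_le_of_mem_Icc {t τ : ℝ} (hR : LocallyIntegrable R volume) (k : ℕ) (hτ : τ ∈ Icc s t) :
    ‖timeOrderedIntegral R s k τ‖ ≤ ‖(1 : A)‖ * (∫ σ in s..t, ‖R σ‖) ^ k / k.factorial := by
  refine (norm_le hR k hτ.1).trans ?_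
  have hρ : ∫ σ in s..τ, ‖R σ‖ ≤ ∫ σ in s..t, ‖R σ‖ :=
    integral_mono_interval le_rfl hτ.1 hτ.2 (Eventually.of_forall fun _ ↦ norm_nonneg _)
      (hR.norm.intervalIntegrable s t)
  gcongr
  exact integral_nonneg hτ.1 fun _ _ ↦ norm_nonneg _

end timeOrderedIntegral

theorem Complex.norm_I_pow_smul {E : Type*} [SeminormedAddCommGroup E] [NormedSpace ℂ E]
    (k : ℕ) (x : E) : ‖Complex.I ^ k • x‖ = ‖x‖ := by
  rw [norm_smul, norm_pow, Complex.norm_I, one_pow, one_mul]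

section Dyson

variable {A : Type*} [NormedRing A] [NormedAlgebra ℂ A] [CompleteSpace A] {R : ℝ → A} {s t : ℝ}

theorem hasSum_dyson (hR : LocallyIntegrable R volume) (hst : s ≤ t) :
    HasSum (fun k ↦ Complex.I ^ k • timeOrderedIntegral R s k t) (dyson R s t) := by
  have hsum : Summable fun k ↦ Complex.I ^ k • timeOrderedIntegral R s k t := by
    refine Summable.of_norm_bounded
      ((Real.summable_pow_div_factorial (∫ σ in s..t, ‖R σ‖)).mul_left ‖(1 : A)‖) fun k ↦ ?_
    rw [Complex.norm_I_pow_smul, ← mul_div_assoc]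
    exact timeOrderedIntegral.norm_le_of_mem_Icc hR k (right_mem_Icc.mpr hst)
  convert hsum.hasSum using 1
  rw [dyson, hsum.tsum_eq_zero_add, pow_zero, timeOrderedIntegral.zero_apply, one_smul]

theorem hasSum_integral_mul_dyson (hR : LocallyIntegrable R volume) (hst : s ≤ t) :
    HasSum (fun k ↦ Complex.I ^ k • timeOrderedIntegral R s (k + 1) t)
      (∫ τ in s..t, R τ * dyson R s τ) := by
  set c : ℕ → ℝ := fun k ↦ ‖(1 : A)‖ * (∫ σ in s..t, ‖R σ‖) ^ k / k.factorial
  have hc : Summable c := by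
    simpa only [c, mul_div_assoc] using
      (Real.summable_pow_div_factorial (∫ σ in s..t, ‖R σ‖)).mul_left ‖(1 : A)‖
  have hbound : ∀ k, ∀ τ ∈ uIoc s t,
      ‖Complex.I ^ k • (R τ * timeOrderedIntegral R s k τ)‖ ≤ ‖R τ‖ * c k := by
    intro k τ hτ
    rw [uIoc_of_le hst] at hτ
    rw [Complex.norm_I_pow_smul]
    exact (norm_mul_le _ _).trans (by
      gcongr; exact timeOrderedIntegral.norm_le_of_mem_Icc hR k (Ioc_subset_Icc_self hτ))
  have hlim : ∀ τ ∈ uIoc s t, HasSum (fun k ↦ Complex.I ^ k • (R τ * timeOrderedIntegral R s k τ))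
      (R τ * dyson R s τ) := by
    intro τ hτ
    rw [uIoc_of_le hst] at hτ
    simpa only [mul_smul_comm] using (hasSum_dyson hR hτ.1.le).mul_left (R τ)
  have key := hasSum_integral_of_dominated_convergence
    (F := fun k τ ↦ Complex.I ^ k • (R τ * timeOrderedIntegral R s k τ)) (fun k τ ↦ ‖R τ‖ * c k)
    (fun k ↦ ((hR.aestronglyMeasurable.mul
      (timeOrderedIntegral.continuous hR k).aestronglyMeasurable).const_smul _).restrict)
    (fun k ↦ Eventually.of_forall (hbound k)) (Eventually.of_forall fun τ _ ↦ hc.mul_left ‖R τ‖)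
    (by simpa only [tsum_mul_left] using (hR.norm.intervalIntegrable s t).mul_const _)
    (Eventually.of_forall hlim)
  simpa only [intervalIntegral.integral_smul, ← timeOrderedIntegral.succ_apply] using key

end Dyson

theorem dyson_volterra_integral_equation
    {A : Type*} [NormedRing A] [NormedAlgebra ℂ A] [CompleteSpace A]
    (R : ℝ → A) (β : ℝ → ℝ)
    (hR : AEStronglyMeasurable R (volume : Measure ℝ))
    (hβ : Integrable β (volume : Measure ℝ))
    (hRβ : ∀ᵐ τ ∂(volume : Measure ℝ), ‖R τ‖ ≤ β τ)
    (s t : ℝ) (hst : s ≤ t) :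
    dyson R s t = 1 + Complex.I • ∫ τ in s..t, R τ * dyson R s τ := by
  have hRint : Integrable R volume := hβ.mono' hR hRβ
  rw [← ((hasSum_integral_mul_dyson hRint.locallyIntegrable hst).const_smul Complex.I).tsum_eq]
  simp only [smul_smul, ← pow_succ', dyson]
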